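/- Every integer solution x of q(x) = 1, where q is the quadratic form of the tree Aₙ, satisfies |x₁| ≤ 1 and |xₙ| ≤ 1. -/

import Mathlib

/-- The quadratic form of the Coxeter tree `Aₙ`. -/
def qA (n : ℕ) (x : ℕ → ℤ) : ℤ :=
  (∑ i ∈ Finset.range n, (x i)^2) - ∑ i ∈ Finset.range (n-1), x i * x (i+1)

/-!
Doubling `q` completes the squares along the path:
`2 q(x) = x₁² + xₙ² + Σᵢ (xᵢ - xᵢ₊₁)²`.
So `q(x) = 1` forces `x₁² ≤ 2` and `xₙ² ≤ 2`, i.e. `|x₁|, |xₙ| ≤ 1` for integers.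
-/

lemma qA_succ_succ (n : ℕ) (x : ℕ → ℤ) :
    qA (n + 2) x = qA (n + 1) x + x (n + 1) ^ 2 - x n * x (n + 1) := by
  simp only [qA, Nat.add_sub_cancel, show n + 2 - 1 = n + 1 from rfl,
    Finset.sum_range_succ _ (n + 1), Finset.sum_range_succ _ n]
  ring

lemma two_mul_qA_succ (n : ℕ) (x : ℕ → ℤ) :
    2 * qA (n + 1) x = x 0 ^ 2 + x n ^ 2 + ∑ i ∈ Finset.range n, (x i - x (i + 1)) ^ 2 := by
  induction n with
  | zero => simp [qA, two_mul]
  | succ n ih => rw [qA_succ_succ, Finset.sum_range_succ]; linear_combination ih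

lemma Int.abs_le_one_of_sq_le_two {a : ℤ} (h : a ^ 2 ≤ 2) : |a| ≤ 1 := by
  by_contra! ha
  nlinarith [sq_abs a]

theorem qA_eq_one_ends_le_one (n : ℕ) (hn : 1 ≤ n) (x : ℕ → ℤ)
    (hx : qA n x = 1) : |x 0| ≤ 1 ∧ |x (n-1)| ≤ 1 := by
  obtain ⟨m, rfl⟩ := Nat.exists_eq_add_of_le' hn
  have hsq := two_mul_qA_succ m x
  have hdiff : 0 ≤ ∑ i ∈ Finset.range m, (x i - x (i + 1)) ^ 2 :=
    Finset.sum_nonneg fun i _ => sq_nonneg _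
  rw [hx] at hsq
  rw [Nat.add_sub_cancel]
  exact ⟨Int.abs_le_one_of_sq_le_two (by nlinarith [sq_nonneg (x m)]),
    Int.abs_le_one_of_sq_le_two (by nlinarith [sq_nonneg (x 0)])⟩
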